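/- Let 0 ≤ t₀ < T, c ≥ 0, let x : [t₀,T] → [0,∞) be continuous, and let h : [t₀,T] → [0,∞) be integrable. Suppose that for every t ∈ [t₀,T], x(t)² ≤ c ∫_t^T x(s) h(s) ds. Then for every t ∈ [t₀,T], x(t) ≤ (c/2) ∫_t^T h(s) ds. -/

import Mathlib

/-!
Put `y(t) = c ∫_t^T x h`, so that `x ≤ √y`. Differentiating `y` gives `y' = -c x h ≥ -c h √y`,
i.e. `(√y)' ≥ -(c/2) h`, and integrating from `t` to `T`, where `y` vanishes, gives
`x(t) ≤ √(y t) ≤ (c/2) ∫_t^T h`. As `h` is only integrable, `y` is merely absolutely continuous,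
and `√y` need not be: the argument is run for `√(y + ε)`, then `ε → 0`.
-/

open MeasureTheory Set Filter intervalIntegral

open scoped NNReal

theorem AbsolutelyContinuousOnInterval.comp_lipschitzOnWith {X Y : Type*} [PseudoMetricSpace X]
    [PseudoMetricSpace Y] {f : ℝ → X} {g : X → Y} {a b : ℝ} {K : ℝ≥0} {s : Set X}
    (hg : LipschitzOnWith K g s) (hf : AbsolutelyContinuousOnInterval f a b)
    (hfs : MapsTo f (uIcc a b) s) : AbsolutelyContinuousOnInterval (g ∘ f) a b := by
  have hK := Tendsto.const_mul (K : ℝ) hf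
  rw [mul_zero] at hK
  refine squeeze_zero' (.of_forall fun _ ↦ Finset.sum_nonneg fun _ _ ↦ dist_nonneg) ?_ hK
  filter_upwards [eventually_inf_principal.2 (.of_forall fun _ hE ↦ hE)] with E hE
  rw [Finset.mul_sum]
  exact Finset.sum_le_sum fun i hi ↦
    hg.dist_le_mul _ (hfs (hE.1 i hi).1) _ (hfs (hE.1 i hi).2)

section IntegralLeft

variable {f : ℝ → ℝ} {a b c : ℝ}

theorem IntervalIntegrable.absolutelyContinuousOnInterval_integral_left
    (hf : IntervalIntegrable f volume a b) (hc : c ∈ uIcc a b) :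
    AbsolutelyContinuousOnInterval (fun x ↦ ∫ v in x..c, f v) a b := by
  rw [show (fun x ↦ ∫ v in x..c, f v) = -fun x ↦ ∫ v in c..x, f v from
    funext fun x ↦ integral_symm c x]
  exact (hf.absolutelyContinuousOnInterval_intervalIntegral hc).neg

theorem IntervalIntegrable.ae_hasDerivAt_integral_left (hf : IntervalIntegrable f volume a b) :
    ∀ᵐ x, x ∈ uIcc a b → ∀ c ∈ uIcc a b,
      HasDerivAt (fun x ↦ ∫ t in x..c, f t) (-f x) x := by
  filter_upwards [hf.ae_hasDerivAt_integral] with x hx hxab c hc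
  rw [show (fun x ↦ ∫ t in x..c, f t) = fun x ↦ -∫ t in c..x, f t from
    funext fun x ↦ integral_symm c x]
  exact (hx hxab c hc).neg

end IntegralLeft

theorem AbsolutelyContinuousOnInterval.le_add_integral_of_neg_le_deriv {z k : ℝ → ℝ} {a b : ℝ}
    (hab : a ≤ b) (hz : AbsolutelyContinuousOnInterval z a b)
    (hk : IntervalIntegrable k volume a b)
    (hderiv : ∀ᵐ s, s ∈ Icc a b → -k s ≤ deriv z s) :
    z a ≤ z b + ∫ s in a..b, k s := by
  have hmono : ∫ s in a..b, -k s ≤ ∫ s in a..b, deriv z s :=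
    integral_mono_ae_restrict hab hk.neg hz.intervalIntegrable_deriv
      ((ae_restrict_iff' measurableSet_Icc).2 hderiv)
  rw [hz.integral_deriv_eq_sub, intervalIntegral.integral_neg] at hmono
  linarith

theorem AbsolutelyContinuousOnInterval.sqrt_add_const {y : ℝ → ℝ} {a b ε : ℝ} (hε : 0 < ε)
    (hy : AbsolutelyContinuousOnInterval y a b) (hy0 : ∀ s ∈ uIcc a b, 0 ≤ y s) :
    AbsolutelyContinuousOnInterval (fun s ↦ √(y s + ε)) a b := by
  obtain ⟨M, hM⟩ := hy.exists_bound
  have hsqrt : ContDiffOn ℝ 1 (fun u : ℝ ↦ √(u + ε)) (Icc 0 M) :=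
    (contDiffOn_id.add contDiffOn_const).sqrt fun u hu ↦ by
      simp only [id]
      linarith [hu.1]
  obtain ⟨K, hK⟩ := hsqrt.exists_lipschitzOnWith one_ne_zero (convex_Icc 0 M) isCompact_Icc
  have hmaps : MapsTo y (uIcc a b) (Icc 0 M) := fun s hs ↦
    ⟨hy0 s hs, (le_abs_self _).trans (hM s hs)⟩
  exact (hy.comp_lipschitzOnWith hK hmaps :)

theorem AbsolutelyContinuousOnInterval.sqrt_le_sqrt_add_integral {y k : ℝ → ℝ} {a b : ℝ}
    (hab : a ≤ b) (hy : AbsolutelyContinuousOnInterval y a b) (hy0 : ∀ s ∈ uIcc a b, 0 ≤ y s)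
    (hk : IntervalIntegrable k volume a b) (hk0 : ∀ s ∈ uIcc a b, 0 ≤ k s)
    (hderiv : ∀ᵐ s, s ∈ uIcc a b → -(2 * k s * √(y s)) ≤ deriv y s) :
    √(y a) ≤ √(y b) + ∫ s in a..b, k s := by
  have hreg : ∀ ε > 0, √(y a + ε) ≤ √(y b + ε) + ∫ s in a..b, k s := fun ε hε ↦ by
    refine (hy.sqrt_add_const hε hy0).le_add_integral_of_neg_le_deriv hab hk ?_
    filter_upwards [hderiv, hy.ae_differentiableAt] with s hs hdiff hsab
    rw [← uIcc_of_le hab] at hsab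
    have hyε : 0 < y s + ε := by linarith [hy0 s hsab]
    rw [((hdiff hsab).hasDerivAt.add_const ε |>.sqrt hyε.ne').deriv,
      le_div_iff₀ (by positivity)]
    have : √(y s) ≤ √(y s + ε) := Real.sqrt_le_sqrt (by linarith)
    nlinarith [hs hsab, hk0 s hsab]
  refine le_of_forall_pos_le_add fun δ hδ ↦ ?_
  have hyb := Real.sq_sqrt (hy0 b right_mem_uIcc)
  have hsqrt_add : √(y b + δ ^ 2) ≤ √(y b) + δ :=
    Real.sqrt_le_iff.2 ⟨by positivity, by nlinarith [Real.sqrt_nonneg (y b)]⟩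
  calc √(y a) ≤ √(y a + δ ^ 2) := Real.sqrt_le_sqrt (le_add_of_nonneg_right (sq_nonneg δ))
    _ ≤ √(y b + δ ^ 2) + ∫ s in a..b, k s := hreg _ (by positivity)
    _ ≤ √(y b) + (∫ s in a..b, k s) + δ := by linarith

theorem bihari_backward_general
    (t₀ T c : ℝ) (hc : 0 ≤ c)
    (x h : ℝ → ℝ)
    (hx_cont : ContinuousOn x (Set.Icc t₀ T))
    (hh_int : IntegrableOn h (Set.Icc t₀ T))
    (hh_nonneg : ∀ t ∈ Set.Icc t₀ T, 0 ≤ h t)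
    (hx_le : ∀ t ∈ Set.Icc t₀ T, x t ^ 2 ≤ c * ∫ s in t..T, x s * h s) :
    ∀ t ∈ Set.Icc t₀ T, x t ≤ (c / 2) * ∫ s in t..T, h s := by
  intro t ht
  set y : ℝ → ℝ := fun s ↦ c * ∫ u in s..T, x u * h u
  have hsub : uIcc t T ⊆ Icc t₀ T := by
    rw [uIcc_of_le ht.2]
    exact Icc_subset_Icc_left ht.1
  have hxh : IntervalIntegrable (fun u ↦ x u * h u) volume t T :=
    ((hh_int.continuousOn_mul hx_cont isCompact_Icc).mono_set hsub).intervalIntegrable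
  have hh : IntervalIntegrable h volume t T := (hh_int.mono_set hsub).intervalIntegrable
  have hx_le_sqrt : ∀ s ∈ Icc t₀ T, x s ≤ √(y s) := fun s hs ↦
    (le_abs_self _).trans ((Real.sqrt_sq_eq_abs (x s)).symm.trans_le
      (Real.sqrt_le_sqrt (hx_le s hs)))
  have hderiv : ∀ᵐ s, s ∈ uIcc t T → -(2 * (c / 2 * h s) * √(y s)) ≤ deriv y s := by
    filter_upwards [hxh.ae_hasDerivAt_integral_left] with s hs hsI
    rw [((hs hsI T right_mem_uIcc).const_mul c).deriv]
    have := mul_le_mul_of_nonneg_left (hx_le_sqrt s (hsub hsI))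
      (mul_nonneg hc (hh_nonneg s (hsub hsI)))
    linarith
  have hcomp := (hxh.absolutelyContinuousOnInterval_integral_left right_mem_uIcc).const_mul c
    |>.sqrt_le_sqrt_add_integral ht.2
      (fun s hs ↦ (sq_nonneg _).trans (hx_le s (hsub hs))) (hh.const_mul (c / 2))
      (fun s hs ↦ mul_nonneg (by positivity) (hh_nonneg s (hsub hs))) hderiv
  rw [integral_same, mul_zero, Real.sqrt_zero, zero_add,
    intervalIntegral.integral_const_mul] at hcomp
  exact (hx_le_sqrt t ht).trans hcomp

/-- Bihari-type backward integral inequality (Lemma 20 of Maticiuc–Nie):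
if x ≥ 0 is continuous on [t₀,T], h ≥ 0 is integrable on [t₀,T], and
x(t)² ≤ c ∫_t^T x(s) h(s) ds for every t ∈ [t₀,T], then x(t) ≤ (c/2) ∫_t^T h(s) ds. -/
theorem bihari_backward
    (t₀ T c : ℝ) (ht₀ : 0 ≤ t₀) (ht₀T : t₀ < T) (hc : 0 ≤ c)
    (x h : ℝ → ℝ)
    (hx_cont : ContinuousOn x (Set.Icc t₀ T))
    (hx_nonneg : ∀ t ∈ Set.Icc t₀ T, 0 ≤ x t)
    (hh_int : IntegrableOn h (Set.Icc t₀ T))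
    (hh_nonneg : ∀ t ∈ Set.Icc t₀ T, 0 ≤ h t)
    (hx_le : ∀ t ∈ Set.Icc t₀ T, x t ^ 2 ≤ c * ∫ s in t..T, x s * h s) :
    ∀ t ∈ Set.Icc t₀ T, x t ≤ (c / 2) * ∫ s in t..T, h s :=
  bihari_backward_general t₀ T c hc x h hx_cont hh_int hh_nonneg hx_le
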